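/- arXiv:2408.00262 — 4 statements merged into one kernel-verified Lean document; each statement's English description precedes it below -/
import Mathlib

section
/- Truth lemma for the canonical segment model: let Ax be a set of L-formulas and let M_{CK⊕Ax} be the canonical model whose worlds are all segments. Then for every segment (Γ, U) and every formula φ, we have M_{CK⊕Ax}, (Γ, U) ⊩ φ if and only if φ ∈ Γ. -/
/-- Formulas of the modal language L. -/
inductive Form : Type
  | var : ℕ → Form
  | bot : Form
  | and : Form → Form → Form
  | or : Form → Form → Form
  | imp : Form → Form → Form
  | box : Form → Form
  | dia : Form → Form

namespace Form

/-- Negation abbreviation: ¬φ := φ → ⊥. -/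
def neg (φ : Form) : Form := φ.imp bot

/-- Uniform substitution. -/
def subst (σ : ℕ → Form) : Form → Form
  | var p => σ p
  | bot => bot
  | and a b => and (a.subst σ) (b.subst σ)
  | or a b => or (a.subst σ) (b.subst σ)
  | imp a b => imp (a.subst σ) (b.subst σ)
  | box a => box (a.subst σ)
  | dia a => dia (a.subst σ)

end Form

/-- Substitution instances of the axioms of a standard Hilbert axiomatisation
of intuitionistic propositional logic (the axioms are schematic, so all
substitution instances are included). -/
inductive IPLAx : Form → Prop
  | a1 (φ ψ : Form) : IPLAx (φ.imp (ψ.imp φ))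
  | a2 (φ ψ χ : Form) : IPLAx ((φ.imp (ψ.imp χ)).imp ((φ.imp ψ).imp (φ.imp χ)))
  | a3 (φ ψ : Form) : IPLAx ((φ.and ψ).imp φ)
  | a4 (φ ψ : Form) : IPLAx ((φ.and ψ).imp ψ)
  | a5 (φ ψ : Form) : IPLAx (φ.imp (ψ.imp (φ.and ψ)))
  | a6 (φ ψ : Form) : IPLAx (φ.imp (φ.or ψ))
  | a7 (φ ψ : Form) : IPLAx (ψ.imp (φ.or ψ))
  | a8 (φ ψ χ : Form) : IPLAx ((φ.imp χ).imp ((ψ.imp χ).imp ((φ.or ψ).imp χ)))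
  | a9 (φ : Form) : IPLAx (Form.bot.imp φ)

/-- Substitution instances of K_□ : □(φ→ψ) → (□φ → □ψ). -/
def KBoxAx (χ : Form) : Prop :=
  ∃ φ ψ : Form, χ = ((φ.imp ψ).box).imp ((φ.box).imp (ψ.box))

/-- Substitution instances of K_◇ : □(φ→ψ) → (◇φ → ◇ψ). -/
def KDiaAx (χ : Form) : Prop :=
  ∃ φ ψ : Form, χ = ((φ.imp ψ).box).imp ((φ.dia).imp (ψ.dia))

/-- Axiom instances available in the calculus CK ⊕ Ax : instances of IPL
axioms, of K_□, of K_◇, or substitution instances of members of Ax. -/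
def AxInst (Ax : Set Form) (φ : Form) : Prop :=
  IPLAx φ ∨ KBoxAx φ ∨ KDiaAx φ ∨ ∃ ψ ∈ Ax, ∃ σ : ℕ → Form, φ = ψ.subst σ

/-- The generalised Hilbert calculus CK ⊕ Ax deriving consecutions Γ ⊢_Ax φ:
rules (Ax), (MP), (Nec) and (El). -/
inductive Prv (Ax : Set Form) : Set Form → Form → Prop
  | ax {Γ : Set Form} {φ : Form} : AxInst Ax φ → Prv Ax Γ φ
  | mp {Γ : Set Form} {φ ψ : Form} : Prv Ax Γ φ → Prv Ax Γ (φ.imp ψ) → Prv Ax Γ ψ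
  | nec {Γ : Set Form} {φ : Form} : Prv Ax ∅ φ → Prv Ax Γ φ.box
  | el {Γ : Set Form} {φ : Form} : φ ∈ Γ → Prv Ax Γ φ

/-- A CK-frame (X, e, ≤, R): ≤ is a preorder, e is ≤-maximal (an "exploding"
world), and e R x iff x = e. -/
structure CKFrame where
  W : Type
  le : W → W → Prop
  R : W → W → Prop
  e : W
  le_refl : ∀ x : W, le x x
  le_trans : ∀ {x y z : W}, le x y → le y z → le x z
  e_max : ∀ {x : W}, le e x → x = e
  e_R : ∀ x : W, R e x ↔ x = e

/-- A valuation on a CK-frame: each variable gets a ≤-upset containing e. -/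
structure Val (F : CKFrame) where
  V : ℕ → F.W → Prop
  mono : ∀ (p : ℕ) {x y : F.W}, F.le x y → V p x → V p y
  at_e : ∀ p : ℕ, V p F.e

/-- The forcing relation M, x ⊩ φ of a CK-model (F, V). -/
def Forces (F : CKFrame) (V : Val F) : Form → F.W → Prop
  | .var p, x => V.V p x
  | .bot, x => x = F.e
  | .and a b, x => Forces F V a x ∧ Forces F V b x
  | .or a b, x => Forces F V a x ∨ Forces F V b x
  | .imp a b, x => ∀ y : F.W, F.le x y → Forces F V a y → Forces F V b y
  | .box a, x => ∀ y z : F.W, F.le x y → F.R y z → Forces F V a z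
  | .dia a, x => ∀ y : F.W, F.le x y → ∃ z : F.W, F.R y z ∧ Forces F V a z

/-- A frame validates the consecution Γ ⊢ φ if in every model on it, every
world forcing all of Γ forces φ. -/
def ValidConseq (F : CKFrame) (Γ : Set Form) (φ : Form) : Prop :=
  ∀ (V : Val F) (x : F.W), (∀ ψ ∈ Γ, Forces F V ψ x) → Forces F V φ x

/-- A frame validates a formula φ if every world in every model on it forces φ. -/
def ValidForm (F : CKFrame) (φ : Form) : Prop :=
  ∀ (V : Val F) (x : F.W), Forces F V φ x

/-- Γ semantically entails φ on a class 𝓕 of CK-frames. -/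
def SemEntails (𝓕 : Set CKFrame) (Γ : Set Form) (φ : Form) : Prop :=
  ∀ F ∈ 𝓕, ValidConseq F Γ φ

/-- A theory: a deductively closed set of formulas. -/
def Theory (Ax : Set Form) (Γ : Set Form) : Prop := ∀ φ : Form, Prv Ax Γ φ → φ ∈ Γ

/-- A set of formulas is prime if φ∨ψ ∈ Γ implies φ ∈ Γ or ψ ∈ Γ. -/
def PrimeSet (Γ : Set Form) : Prop := ∀ φ ψ : Form, φ.or ψ ∈ Γ → φ ∈ Γ ∨ ψ ∈ Γ

/-- A prime theory (possibly inconsistent). -/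
def PrimeTheory (Ax : Set Form) (Γ : Set Form) : Prop := Theory Ax Γ ∧ PrimeSet Γ

/-- (Γ, U) is a segment: Γ is a prime theory, U a set of prime theories,
□φ ∈ Γ implies φ ∈ Δ for all Δ ∈ U, and ◇φ ∈ Γ implies φ ∈ Δ for some Δ ∈ U. -/
def IsSegment (Ax : Set Form) (Γ : Set Form) (U : Set (Set Form)) : Prop :=
  PrimeTheory Ax Γ ∧ (∀ Δ ∈ U, PrimeTheory Ax Δ) ∧
  (∀ φ : Form, φ.box ∈ Γ → ∀ Δ ∈ U, φ ∈ Δ) ∧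
  (∀ φ : Form, φ.dia ∈ Γ → ∃ Δ ∈ U, φ ∈ Δ)

/-- Segments, the worlds of the canonical model of CK ⊕ Ax. -/
structure Segment (Ax : Set Form) where
  hd : Set Form
  tl : Set (Set Form)
  seg : IsSegment Ax hd tl

theorem Segment.ext' {Ax : Set Form} :
    ∀ {s t : Segment Ax}, s.hd = t.hd → s.tl = t.tl → s = t
  | ⟨_, _, _⟩, ⟨_, _, _⟩, rfl, rfl => rfl

theorem theory_bot_eq_univ {Ax : Set Form} {Δ : Set Form} (hΔ : Theory Ax Δ)
    (hbot : Form.bot ∈ Δ) : Δ = Set.univ := by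
  ext φ
  simp only [Set.mem_univ, iff_true]
  exact hΔ φ (Prv.mp (Prv.el hbot) (Prv.ax (Or.inl (IPLAx.a9 φ))))

theorem univ_primeTheory (Ax : Set Form) : PrimeTheory Ax Set.univ :=
  ⟨fun _ _ => Set.mem_univ _, fun φ _ _ => Or.inl (Set.mem_univ φ)⟩

/-- The exploding segment (L, {L}). -/
def explSeg (Ax : Set Form) : Segment Ax where
  hd := Set.univ
  tl := {Set.univ}
  seg := by
    refine ⟨univ_primeTheory Ax, ?_, ?_, ?_⟩
    · intro Δ hΔ
      rw [Set.mem_singleton_iff] at hΔ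
      subst hΔ
      exact univ_primeTheory Ax
    · intro φ _ Δ hΔ
      rw [Set.mem_singleton_iff] at hΔ
      subst hΔ
      exact Set.mem_univ φ
    · intro φ _
      exact ⟨Set.univ, rfl, Set.mem_univ φ⟩

theorem seg_univ_tl {Ax : Set Form} (s : Segment Ax) (h : s.hd = Set.univ) :
    s.tl = {Set.univ} := by
  obtain ⟨_, htl, hbox, hdia⟩ := s.seg
  ext Δ
  simp only [Set.mem_singleton_iff]
  constructor
  · intro hΔ
    have hb : Form.bot.box ∈ s.hd := by rw [h]; exact Set.mem_univ _
    exact theory_bot_eq_univ (htl Δ hΔ).1 (hbox Form.bot hb Δ hΔ)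
  · intro hΔ
    subst hΔ
    have hd : Form.bot.dia ∈ s.hd := by rw [h]; exact Set.mem_univ _
    obtain ⟨Δ', hΔ', hbot⟩ := hdia Form.bot hd
    have := theory_bot_eq_univ (htl Δ' hΔ').1 hbot
    rwa [this] at hΔ'

/-- The canonical frame of CK ⊕ Ax: all segments, ordered by inclusion of
heads, with (Γ,U) R (Γ',U') iff Γ' ∈ U, and exploding world (L, {L}). -/
def canonFrame (Ax : Set Form) : CKFrame where
  W := Segment Ax
  le s t := s.hd ⊆ t.hd
  R s t := t.hd ∈ s.tl
  e := explSeg Ax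
  le_refl _ := subset_rfl
  le_trans h1 h2 := h1.trans h2
  e_max := by
    intro s h
    have hhd : s.hd = Set.univ := Set.univ_subset_iff.mp h
    exact Segment.ext' hhd (seg_univ_tl s hhd)
  e_R := by
    intro s
    constructor
    · intro h
      have hhd : s.hd = Set.univ := h
      exact Segment.ext' hhd (seg_univ_tl s hhd)
    · intro h
      subst h
      rfl

/-- The canonical valuation V(p) = { (Γ,U) : p ∈ Γ }. -/
def canonVal (Ax : Set Form) : Val (canonFrame Ax) where
  V p s := Form.var p ∈ s.hd
  mono := by intro p x y h hp; exact h hp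
  at_e := by intro p; exact Set.mem_univ _


/-!
The propositional cases of the induction on `φ` only use that heads are prime theories. For `→`,
`□` and `◇`, a formula missing from the head `Γ` is refuted at a segment built around a prime
theory obtained by Lindenbaum's lemma. Since the tail of a segment is part of the world, it can be
chosen freely: if `□φ ∉ Γ`, add to the tail a prime `Δ ⊇ □⁻¹Γ` avoiding `φ`; if `◇φ ∉ Γ`, take as
tail all prime `Δ ⊇ □⁻¹Γ` avoiding `φ`. The latter is still a segment because, by `K_◇`, if `φ`
followed from `ψ` and `□⁻¹Γ` for some `◇ψ ∈ Γ`, then `◇φ ∈ Γ`.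
-/

namespace Prv

variable {Ax Γ Δ : Set Form} {φ ψ : Form}

theorem mono (h : Prv Ax Γ φ) (hs : Γ ⊆ Δ) : Prv Ax Δ φ := by
  induction h generalizing Δ with
  | ax h => exact ax h
  | mp _ _ ih₁ ih₂ => exact mp (ih₁ hs) (ih₂ hs)
  | nec h => exact nec h
  | el h => exact el (hs h)

theorem ipl (h : IPLAx φ) : Prv Ax Γ φ :=
  ax (Or.inl h)

theorem imp_self (φ : Form) : Prv Ax Γ (φ.imp φ) :=
  mp (ipl (.a1 φ φ)) (mp (ipl (.a1 φ (φ.imp φ))) (ipl (.a2 φ (φ.imp φ) φ)))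

theorem deduction (h : Prv Ax (insert φ Γ) ψ) : Prv Ax Γ (φ.imp ψ) := by
  generalize hΔ : insert φ Γ = Δ at h
  induction h with
  | ax h => exact mp (ax h) (ipl (.a1 _ φ))
  | mp _ _ ih₁ ih₂ => exact mp (ih₁ hΔ) (mp (ih₂ hΔ) (ipl (.a2 _ _ _)))
  | nec h => exact mp (nec h) (ipl (.a1 _ φ))
  | el h =>
    subst hΔ
    rcases h with rfl | h
    · exact imp_self _
    · exact mp (el h) (ipl (.a1 _ φ))

theorem exists_finite_subset (h : Prv Ax Γ φ) : ∃ Δ ⊆ Γ, Δ.Finite ∧ Prv Ax Δ φ := by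
  induction h with
  | ax h => exact ⟨∅, Set.empty_subset _, Set.finite_empty, ax h⟩
  | mp _ _ ih₁ ih₂ =>
    obtain ⟨Δ₁, hs₁, hf₁, hp₁⟩ := ih₁
    obtain ⟨Δ₂, hs₂, hf₂, hp₂⟩ := ih₂
    exact ⟨Δ₁ ∪ Δ₂, Set.union_subset hs₁ hs₂, hf₁.union hf₂,
      mp (hp₁.mono Set.subset_union_left) (hp₂.mono Set.subset_union_right)⟩
  | nec h => exact ⟨∅, Set.empty_subset _, Set.finite_empty, nec h⟩
  | el h => exact ⟨{_}, Set.singleton_subset_iff.mpr h, Set.finite_singleton _, el rfl⟩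

theorem box_image (h : Prv Ax Γ φ) : Prv Ax (Form.box '' Γ) φ.box := by
  induction h with
  | ax h => exact nec (ax h)
  | @mp _ χ ψ _ _ ih₁ ih₂ => exact mp ih₁ (mp ih₂ (ax (Or.inr (Or.inl ⟨χ, ψ, rfl⟩))))
  | nec h => exact nec (nec h)
  | el h => exact el ⟨_, h, rfl⟩

theorem box_of_box_preimage (h : Prv Ax (Form.box ⁻¹' Γ) φ) : Prv Ax Γ φ.box :=
  h.box_image.mono (Set.image_preimage_subset _ _)

theorem dia_of_box_preimage (h : Prv Ax (insert ψ (Form.box ⁻¹' Γ)) φ) :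
    Prv Ax (insert ψ.dia Γ) φ.dia :=
  mp (el (Set.mem_insert _ _))
    (mp (h.deduction.box_of_box_preimage.mono (Set.subset_insert _ _))
      (ax (Or.inr (Or.inr (Or.inl ⟨ψ, φ, rfl⟩)))))

end Prv

section Lindenbaum

variable {Ax Γ m : Set Form} {φ ψ : Form}

theorem Theory.mem_of_prv_imp (hΓ : Theory Ax Γ) (hφ : φ ∈ Γ) (h : Prv Ax Γ (φ.imp ψ)) :
    ψ ∈ Γ :=
  hΓ ψ (Prv.mp (Prv.el hφ) h)

theorem exists_maximal_not_prv (h : ¬ Prv Ax Γ φ) :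
    ∃ m ⊇ Γ, Maximal (fun Δ => ¬ Prv Ax Δ φ) m := by
  refine zorn_subset_nonempty _
    (fun c hc hchain hne => ⟨⋃₀ c, ?_, fun _ => Set.subset_sUnion_of_mem⟩) Γ h
  intro hprv
  obtain ⟨Δ, hΔ, hfin, hp⟩ := hprv.exists_finite_subset
  obtain ⟨t, ht, hΔt⟩ := hchain.directedOn.exists_mem_subset_of_finite_of_subset_sUnion hne hfin hΔ
  exact hc ht (hp.mono hΔt)

theorem Maximal.prv_imp_of_not_mem (hm : Maximal (fun Δ => ¬ Prv Ax Δ φ) m) (hψ : ψ ∉ m) :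
    Prv Ax m (ψ.imp φ) := by
  by_contra h
  exact hψ (hm.mem_of_prop_insert fun hp => h hp.deduction)

theorem Maximal.primeTheory (hm : Maximal (fun Δ => ¬ Prv Ax Δ φ) m) : PrimeTheory Ax m := by
  refine ⟨fun ψ hψ => ?_, fun α β hαβ => ?_⟩
  · by_contra hψm
    exact hm.prop (Prv.mp hψ (hm.prv_imp_of_not_mem hψm))
  · by_contra! h
    exact hm.prop (Prv.mp (Prv.el hαβ) (Prv.mp (hm.prv_imp_of_not_mem h.2)
      (Prv.mp (hm.prv_imp_of_not_mem h.1) (Prv.ipl (.a8 α β φ)))))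

theorem exists_primeTheory_of_not_prv (h : ¬ Prv Ax Γ φ) :
    ∃ Δ ⊇ Γ, PrimeTheory Ax Δ ∧ φ ∉ Δ := by
  obtain ⟨m, hΓm, hm⟩ := exists_maximal_not_prv h
  exact ⟨m, hΓm, hm.primeTheory, fun hφ => hm.prop (Prv.el hφ)⟩

end Lindenbaum

section Segments

variable {Ax Γ Δ : Set Form} {φ : Form}

def PrimeTheory.toSegment (h : PrimeTheory Ax Γ) : Segment Ax where
  hd := Γ
  tl := {Set.univ}
  seg := ⟨h, by simpa using univ_primeTheory Ax, by simp, fun _ _ => ⟨Set.univ, rfl, trivial⟩⟩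

def Segment.insertTl (s : Segment Ax) (hΔ : PrimeTheory Ax Δ) (hbox : Form.box ⁻¹' s.hd ⊆ Δ) :
    Segment Ax where
  hd := s.hd
  tl := insert Δ s.tl
  seg := by
    obtain ⟨hhd, htl, hbox', hdia⟩ := s.seg
    refine ⟨hhd, ?_, ?_, fun ψ hψ => ?_⟩
    · rintro Δ' (rfl | hΔ')
      exacts [hΔ, htl Δ' hΔ']
    · rintro ψ hψ Δ' (rfl | hΔ')
      exacts [hbox hψ, hbox' ψ hψ Δ' hΔ']
    · obtain ⟨Δ', hΔ', hψΔ'⟩ := hdia ψ hψ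
      exact ⟨Δ', Set.mem_insert_of_mem _ hΔ', hψΔ'⟩

def refutingSuccessors (Ax Γ : Set Form) (φ : Form) : Set (Set Form) :=
  {Δ | PrimeTheory Ax Δ ∧ Form.box ⁻¹' Γ ⊆ Δ ∧ φ ∉ Δ}

theorem isSegment_refutingSuccessors (hΓ : PrimeTheory Ax Γ) (hφ : φ.dia ∉ Γ) :
    IsSegment Ax Γ (refutingSuccessors Ax Γ φ) := by
  refine ⟨hΓ, fun Δ hΔ => hΔ.1, fun ψ hψ Δ hΔ => hΔ.2.1 hψ, fun ψ hψ => ?_⟩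
  have hnot : ¬ Prv Ax (insert ψ (Form.box ⁻¹' Γ)) φ := fun hp =>
    hφ (hΓ.1 _ ((Prv.dia_of_box_preimage hp).mono (Set.insert_subset hψ subset_rfl)))
  obtain ⟨Δ, hsub, hΔ, hφΔ⟩ := exists_primeTheory_of_not_prv hnot
  exact ⟨Δ, ⟨hΔ, (Set.subset_insert _ _).trans hsub, hφΔ⟩, hsub (Set.mem_insert _ _)⟩

end Segments

namespace Segment

variable {Ax Δ : Set Form} {φ : Form}

theorem theory_hd (s : Segment Ax) : Theory Ax s.hd :=
  s.seg.1.1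

theorem mem_of_box_mem (s : Segment Ax) (h : φ.box ∈ s.hd) (hΔ : Δ ∈ s.tl) : φ ∈ Δ :=
  s.seg.2.2.1 φ h Δ hΔ

theorem exists_primeTheory_mem_tl_of_dia_mem (s : Segment Ax) (h : φ.dia ∈ s.hd) :
    ∃ Δ ∈ s.tl, PrimeTheory Ax Δ ∧ φ ∈ Δ := by
  obtain ⟨Δ, hΔ, hφ⟩ := s.seg.2.2.2 φ h
  exact ⟨Δ, hΔ, s.seg.2.1 Δ hΔ, hφ⟩

end Segment

def TruthLemmaAt (Ax : Set Form) (φ : Form) : Prop :=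
  ∀ s : Segment Ax, Forces (canonFrame Ax) (canonVal Ax) φ s ↔ φ ∈ s.hd

namespace TruthLemmaAt

variable {Ax : Set Form} {a b : Form}

theorem var (p : ℕ) : TruthLemmaAt Ax (.var p) :=
  fun _ => Iff.rfl

theorem bot : TruthLemmaAt Ax .bot := fun s => by
  refine ⟨fun (h : s = explSeg Ax) => h ▸ Set.mem_univ _, fun h => ?_⟩
  have hu := theory_bot_eq_univ s.theory_hd h
  exact Segment.ext' hu (seg_univ_tl s hu)

theorem and (ha : TruthLemmaAt Ax a) (hb : TruthLemmaAt Ax b) : TruthLemmaAt Ax (a.and b) :=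
  fun s => by
  show _ ∧ _ ↔ _
  rw [ha s, hb s]
  refine ⟨fun ⟨ha', hb'⟩ => ?_, fun h => ⟨?_, ?_⟩⟩
  · exact s.theory_hd.mem_of_prv_imp hb' (Prv.mp (Prv.el ha') (Prv.ipl (.a5 a b)))
  · exact s.theory_hd.mem_of_prv_imp h (Prv.ipl (.a3 a b))
  · exact s.theory_hd.mem_of_prv_imp h (Prv.ipl (.a4 a b))

theorem or (ha : TruthLemmaAt Ax a) (hb : TruthLemmaAt Ax b) : TruthLemmaAt Ax (a.or b) :=
  fun s => by
  show _ ∨ _ ↔ _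
  rw [ha s, hb s]
  refine ⟨fun h => h.elim (fun ha' => ?_) (fun hb' => ?_), s.seg.1.2 a b⟩
  · exact s.theory_hd.mem_of_prv_imp ha' (Prv.ipl (.a6 a b))
  · exact s.theory_hd.mem_of_prv_imp hb' (Prv.ipl (.a7 a b))

theorem imp (ha : TruthLemmaAt Ax a) (hb : TruthLemmaAt Ax b) : TruthLemmaAt Ax (a.imp b) :=
  fun s => by
  refine ⟨fun h => ?_, fun h t hst hat => ?_⟩
  · by_contra hn
    obtain ⟨Γ, hsub, hΓ, hbΓ⟩ := exists_primeTheory_of_not_prv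
      fun hp : Prv Ax (insert a s.hd) b => hn (s.theory_hd _ hp.deduction)
    have hat : Forces (canonFrame Ax) (canonVal Ax) a hΓ.toSegment :=
      (ha _).2 (hsub (Set.mem_insert _ _))
    exact hbΓ ((hb _).1 (h hΓ.toSegment ((Set.subset_insert _ _).trans hsub) hat))
  · exact (hb t).2 (t.theory_hd.mem_of_prv_imp ((ha t).1 hat) (Prv.el (hst h)))

theorem box (ha : TruthLemmaAt Ax a) : TruthLemmaAt Ax a.box := fun s => by
  refine ⟨fun h => ?_, fun h t u hst htu => (ha u).2 (t.mem_of_box_mem (hst h) htu)⟩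
  by_contra hn
  obtain ⟨Δ, hsub, hΔ, haΔ⟩ := exists_primeTheory_of_not_prv
    fun hp : Prv Ax (Form.box ⁻¹' s.hd) a => hn (s.theory_hd _ hp.box_of_box_preimage)
  exact haΔ ((ha _).1 (h (s.insertTl hΔ hsub) hΔ.toSegment subset_rfl (Set.mem_insert _ _)))

theorem dia (ha : TruthLemmaAt Ax a) : TruthLemmaAt Ax a.dia := fun s => by
  refine ⟨fun h => ?_, fun h t hst => ?_⟩
  · by_contra hn
    obtain ⟨t, ⟨-, -, hat⟩, hforce⟩ :=
      h ⟨s.hd, _, isSegment_refutingSuccessors s.seg.1 hn⟩ subset_rfl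
    exact hat ((ha t).1 hforce)
  · obtain ⟨Δ, hΔt, hΔ, haΔ⟩ := t.exists_primeTheory_mem_tl_of_dia_mem (hst h)
    exact ⟨hΔ.toSegment, hΔt, (ha _).2 haΔ⟩

end TruthLemmaAt

/-- Truth lemma for the canonical segment model: a segment forces φ iff
φ belongs to its head. -/
theorem truth_lemma (Ax : Set Form) (s : Segment Ax) (φ : Form) :
    Forces (canonFrame Ax) (canonVal Ax) φ s ↔ φ ∈ s.hd := by
  suffices TruthLemmaAt Ax φ from this s
  induction φ with
  | var p => exact .var p
  | bot => exact .bot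
  | and a b ha hb => exact ha.and hb
  | or a b ha hb => exact ha.or hb
  | imp a b ha hb => exact ha.imp hb
  | box a ha => exact ha.box
  | dia a ha => exact ha.dia
end

section
/- If a CK-frame (X, e, ≤, R) satisfies the condition (Cd-suff): for all x there exists x' with x ≤ x' such that for all y, z, if x ≤ y and x' R z then there exists w with yRw and z ≤ w — then the frame validates every instance of the axiom C_◇: ◇(φ∨ψ) → ◇φ ∨ ◇ψ. -/
/-- (Cd-suff). -/
def CdSuff (F : CKFrame) : Prop :=
  ∀ x : F.W, ∃ x' : F.W, F.le x x' ∧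
    ∀ y z : F.W, F.le x y → F.R x' z → ∃ w : F.W, F.R y w ∧ F.le z w

theorem forces_mono (F : CKFrame) (V : Val F) (φ : Form) :
    ∀ {x y : F.W}, F.le x y → Forces F V φ x → Forces F V φ y := by
  induction φ with
  | var p => exact fun h hx => V.mono p h hx
  | bot => intro x y h hx; subst hx; exact F.e_max h
  | and a b iha ihb => exact fun h hx => ⟨iha h hx.1, ihb h hx.2⟩
  | or a b iha ihb => exact fun h hx => hx.elim (fun h1 => Or.inl (iha h h1)) (fun h1 => Or.inr (ihb h h1))
  | imp a b iha ihb => exact fun h hx z hz ha => hx z (F.le_trans h hz) ha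
  | box a ih => exact fun h hx u z hu hz => hx u z (F.le_trans h hu) hz
  | dia a ih => exact fun h hx u hu => hx u (F.le_trans h hu)

/-- (Cd-suff) implies validity of every instance of C_◇ : ◇(φ∨ψ) → ◇φ ∨ ◇ψ. -/
theorem cdSuff_valid (F : CKFrame) (h : CdSuff F) :
    ∀ φ ψ : Form, ValidForm F (((φ.or ψ).dia).imp ((φ.dia).or (ψ.dia))) := by

  intro φ ψ V x y hxy hdia
  obtain ⟨y', hyy', hprop⟩ := h y
  obtain ⟨z, hRz, hz⟩ := hdia y' hyy'
  cases hz with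
  | inl hz =>
    left
    intro u hu
    obtain ⟨w, hw, hzw⟩ := hprop u z hu hRz
    exact ⟨w, hw, forces_mono F V φ hzw hz⟩
  | inr hz =>
    right
    intro u hu
    obtain ⟨w, hw, hzw⟩ := hprop u z hu hRz
    exact ⟨w, hw, forces_mono F V ψ hzw hz⟩
end

section
/- The logic CK ⊕ C_◇ ⊕ I_◇□ is a conservative extension of the diamond-free logic: for every set Γ of formulas and formula φ all of which contain no occurrence of ◇, we have Γ ⊢_{CK ⊕ C_◇ ⊕ I_◇□} φ if and only if Γ ⊢_CK φ. -/
/-- The axiom N_◇ : ◇⊥ → ⊥. -/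
def NdAx : Form := (Form.bot.dia).imp Form.bot

/-- The axiom N_◇□ : ◇⊥ → □⊥. -/
def NdbAx : Form := (Form.bot.dia).imp (Form.bot.box)

/-- The axiom C_◇ : ◇(p ∨ q) → ◇p ∨ ◇q. -/
def CdAx : Form :=
  (((Form.var 0).or (Form.var 1)).dia).imp (((Form.var 0).dia).or ((Form.var 1).dia))

/-- The axiom I_◇□ : (◇p → □q) → □(p → q). -/
def IdbAx : Form :=
  (((Form.var 0).dia).imp ((Form.var 1).box)).imp (((Form.var 0).imp (Form.var 1)).box)

/-- A formula is diamond-free if it contains no occurrence of ◇. -/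
def DiamondFree : Form → Prop
  | .var _ => True
  | .bot => True
  | .and a b => DiamondFree a ∧ DiamondFree b
  | .or a b => DiamondFree a ∧ DiamondFree b
  | .imp a b => DiamondFree a ∧ DiamondFree b
  | .box a => DiamondFree a
  | .dia _ => False


/-- Translation erasing diamonds: ◇ψ ↦ ⊤ (= ⊥→⊥). -/
def tr : Form → Form
  | .var p => .var p
  | .bot => .bot
  | .and a b => (tr a).and (tr b)
  | .or a b => (tr a).or (tr b)
  | .imp a b => (tr a).imp (tr b)
  | .box a => (tr a).box
  | .dia _ => Form.bot.imp Form.bot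

lemma tr_df : ∀ φ, DiamondFree φ → tr φ = φ
  | .var _, _ => rfl
  | .bot, _ => rfl
  | .and a b, h => by simp [tr, tr_df a h.1, tr_df b h.2]
  | .or a b, h => by simp [tr, tr_df a h.1, tr_df b h.2]
  | .imp a b, h => by simp [tr, tr_df a h.1, tr_df b h.2]
  | .box a, h => by simp [tr, tr_df a h]
  | .dia _, h => h.elim

lemma prv_ipl {Γ : Set Form} {φ : Form} (h : IPLAx φ) : Prv ∅ Γ φ :=
  Prv.ax (Or.inl h)

lemma prv_id (Γ : Set Form) (φ : Form) : Prv ∅ Γ (φ.imp φ) :=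
  Prv.mp (prv_ipl (IPLAx.a1 φ φ))
    (Prv.mp (prv_ipl (IPLAx.a1 φ (φ.imp φ))) (prv_ipl (IPLAx.a2 φ (φ.imp φ) φ)))

lemma prv_const {Γ : Set Form} {ψ : Form} (φ : Form) (h : Prv ∅ Γ ψ) :
    Prv ∅ Γ (φ.imp ψ) :=
  Prv.mp h (prv_ipl (IPLAx.a1 ψ φ))

lemma prv_comp {Γ : Set Form} {φ ψ χ : Form}
    (h1 : Prv ∅ Γ (φ.imp (ψ.imp χ))) (h2 : Prv ∅ Γ (φ.imp ψ)) :
    Prv ∅ Γ (φ.imp χ) :=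
  Prv.mp h2 (Prv.mp h1 (prv_ipl (IPLAx.a2 φ ψ χ)))

/-- CK proves (⊤ → □b) → □(a → b). -/
lemma prv_idb_tr (Γ : Set Form) (a b : Form) :
    Prv ∅ Γ (((Form.bot.imp Form.bot).imp b.box).imp ((a.imp b).box)) := by
  have s1 : Prv ∅ Γ ((b.imp (a.imp b)).box) :=
    Prv.nec (prv_ipl (IPLAx.a1 b a))
  have s2 : Prv ∅ Γ ((b.box).imp ((a.imp b).box)) :=
    Prv.mp s1 (Prv.ax (Or.inr (Or.inl ⟨b, a.imp b, rfl⟩)))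
  have h1 := prv_const ((Form.bot.imp Form.bot).imp b.box) s2
  have h2 : Prv ∅ Γ (((Form.bot.imp Form.bot).imp b.box).imp b.box) :=
    prv_comp (prv_id Γ _) (prv_const _ (prv_id Γ Form.bot))
  exact prv_comp h1 h2

lemma prv_mono {Ax : Set Form} : ∀ {Γ φ}, Prv ∅ Γ φ → Prv Ax Γ φ := by
  intro Γ φ h
  induction h with
  | ax h =>
    refine Prv.ax ?_
    rcases h with h | h | h | ⟨ψ, hψ, _⟩
    · exact Or.inl h
    · exact Or.inr (Or.inl h)
    · exact Or.inr (Or.inr (Or.inl h))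
    · exact absurd hψ (Set.notMem_empty ψ)
  | mp _ _ ih1 ih2 => exact Prv.mp ih1 ih2
  | nec _ ih => exact Prv.nec ih
  | el h => exact Prv.el h

lemma prv_tr : ∀ {Γ φ}, Prv {CdAx, IdbAx} Γ φ →
    (∀ ψ ∈ Γ, DiamondFree ψ) → Prv ∅ Γ (tr φ) := by
  intro Γ φ h
  induction h with
  | @ax Γ χ h =>
    intro _
    rcases h with h | ⟨a, b, rfl⟩ | ⟨a, b, rfl⟩ | ⟨ψ, hψ, σ, rfl⟩
    · cases h with
      | a1 φ ψ => exact prv_ipl (IPLAx.a1 (tr φ) (tr ψ))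
      | a2 φ ψ χ => exact prv_ipl (IPLAx.a2 (tr φ) (tr ψ) (tr χ))
      | a3 φ ψ => exact prv_ipl (IPLAx.a3 (tr φ) (tr ψ))
      | a4 φ ψ => exact prv_ipl (IPLAx.a4 (tr φ) (tr ψ))
      | a5 φ ψ => exact prv_ipl (IPLAx.a5 (tr φ) (tr ψ))
      | a6 φ ψ => exact prv_ipl (IPLAx.a6 (tr φ) (tr ψ))
      | a7 φ ψ => exact prv_ipl (IPLAx.a7 (tr φ) (tr ψ))
      | a8 φ ψ χ => exact prv_ipl (IPLAx.a8 (tr φ) (tr ψ) (tr χ))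
      | a9 φ => exact prv_ipl (IPLAx.a9 (tr φ))
    · exact Prv.ax (Or.inr (Or.inl ⟨tr a, tr b, rfl⟩))
    · exact prv_const _ (prv_id Γ (Form.bot.imp Form.bot))
    · rcases hψ with rfl | rfl
      · exact prv_ipl (IPLAx.a6 (Form.bot.imp Form.bot) (Form.bot.imp Form.bot))
      · exact prv_idb_tr Γ (tr (σ 0)) (tr (σ 1))
  | mp _ _ ih1 ih2 => exact fun hΓ => Prv.mp (ih1 hΓ) (ih2 hΓ)
  | nec _ ih => exact fun _ => Prv.nec (ih (fun ψ hψ => absurd hψ (Set.notMem_empty ψ)))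
  | el h => intro hΓ; rw [tr_df _ (hΓ _ h)]; exact Prv.el h

/-- CK ⊕ C_◇ ⊕ I_◇□ is conservative over the diamond-free fragment of CK. -/
theorem ck_cd_idb_conservative (Γ : Set Form) (φ : Form)
    (hΓ : ∀ ψ ∈ Γ, DiamondFree ψ) (hφ : DiamondFree φ) :
    Prv {CdAx, IdbAx} Γ φ ↔ Prv ∅ Γ φ := by
  constructor
  · intro h
    have := prv_tr h hΓ
    rwa [tr_df φ hφ] at this
  · exact prv_mono
end

section
/- The logic CK ⊕ C_◇ ⊕ N_◇ is a conservative extension of the diamond-free logic: for every set Γ of formulas and formula φ all of which contain no occurrence of ◇, we have Γ ⊢_{CK ⊕ C_◇ ⊕ N_◇} φ if and only if Γ ⊢_CK φ. -/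
/-!
Reading `◇` as `⊥` turns every theorem of CK ⊕ C_◇ ⊕ N_◇ into a theorem of CK: `K_◇` becomes
`□(φ → ψ) → (⊥ → ⊥)`, and both `C_◇` and `N_◇` become instances of `⊥ → χ`. Since this reading
fixes diamond-free formulas, a derivation of a diamond-free consecution in the extension erases
to a CK-derivation of the same consecution. The converse is monotonicity in the axioms.
-/

namespace Form

def eraseDia : Form → Form
  | var p => var p
  | bot => bot
  | and a b => and a.eraseDia b.eraseDia
  | or a b => or a.eraseDia b.eraseDia
  | imp a b => imp a.eraseDia b.eraseDia
  | box a => box a.eraseDia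
  | dia _ => bot

theorem eraseDia_eq_self : ∀ {φ : Form}, DiamondFree φ → φ.eraseDia = φ
  | var _, _ => rfl
  | bot, _ => rfl
  | and _ _, h => by rw [eraseDia, eraseDia_eq_self h.1, eraseDia_eq_self h.2]
  | or _ _, h => by rw [eraseDia, eraseDia_eq_self h.1, eraseDia_eq_self h.2]
  | imp _ _, h => by rw [eraseDia, eraseDia_eq_self h.1, eraseDia_eq_self h.2]
  | box a, h => by rw [eraseDia, eraseDia_eq_self (φ := a) h]

theorem image_eraseDia_eq_self {Γ : Set Form} (hΓ : ∀ ψ ∈ Γ, DiamondFree ψ) :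
    eraseDia '' Γ = Γ := by
  conv_rhs => rw [← Set.image_id Γ]
  exact Set.image_congr fun ψ hψ => eraseDia_eq_self (hΓ ψ hψ)

end Form

theorem IPLAx.eraseDia {φ : Form} (h : IPLAx φ) : IPLAx φ.eraseDia := by
  cases h <;> constructor

namespace Prv

theorem mono_axioms {Ax Ax' : Set Form} (hAx : Ax ⊆ Ax') {Γ : Set Form} {φ : Form}
    (h : Prv Ax Γ φ) : Prv Ax' Γ φ := by
  induction h with
  | ax h =>
    rcases h with h | h | h | ⟨ψ, hψ, σ, rfl⟩
    · exact ax (Or.inl h)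
    · exact ax (Or.inr (Or.inl h))
    · exact ax (Or.inr (Or.inr (Or.inl h)))
    · exact ax (Or.inr (Or.inr (Or.inr ⟨ψ, hAx hψ, σ, rfl⟩)))
  | mp _ _ ih₁ ih₂ => exact mp ih₁ ih₂
  | nec _ ih => exact nec ih
  | el h => exact el h

theorem mono_context {Ax Γ Δ : Set Form} (hΓ : Γ ⊆ Δ) {φ : Form} (h : Prv Ax Γ φ) :
    Prv Ax Δ φ := by
  induction h with
  | ax h => exact ax h
  | mp _ _ ih₁ ih₂ => exact mp (ih₁ hΓ) (ih₂ hΓ)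
  | nec h _ => exact nec h
  | el h => exact el (hΓ h)

theorem bot_imp {Ax Γ : Set Form} (φ : Form) : Prv Ax Γ (Form.bot.imp φ) :=
  ax (Or.inl (IPLAx.a9 φ))

theorem imp_intro {Ax Γ : Set Form} {φ : Form} (ψ : Form) (h : Prv Ax Γ φ) :
    Prv Ax Γ (ψ.imp φ) :=
  mp h (ax (Or.inl (IPLAx.a1 φ ψ)))

theorem eraseDia {Ax : Set Form}
    (hAx : ∀ ψ ∈ Ax, ∀ σ : ℕ → Form, Prv ∅ ∅ (ψ.subst σ).eraseDia) {Γ : Set Form} {φ : Form}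
    (h : Prv Ax Γ φ) : Prv ∅ (Form.eraseDia '' Γ) φ.eraseDia := by
  induction h with
  | ax h =>
    rcases h with h | ⟨a, b, rfl⟩ | ⟨a, b, rfl⟩ | ⟨ψ, hψ, σ, rfl⟩
    · exact ax (Or.inl h.eraseDia)
    · exact ax (Or.inr (Or.inl ⟨a.eraseDia, b.eraseDia, rfl⟩))
    · exact imp_intro _ (bot_imp Form.bot)
    · exact mono_context (Set.empty_subset _) (hAx ψ hψ σ)
  | mp _ _ ih₁ ih₂ => exact mp ih₁ ih₂
  | nec _ ih => exact nec (by rwa [Set.image_empty] at ih)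
  | el h => exact el (Set.mem_image_of_mem _ h)

end Prv

/-- CK ⊕ C_◇ ⊕ N_◇ is conservative over the diamond-free fragment of CK. -/
theorem ck_cd_nd_conservative (Γ : Set Form) (φ : Form)
    (hΓ : ∀ ψ ∈ Γ, DiamondFree ψ) (hφ : DiamondFree φ) :
    Prv {CdAx, NdAx} Γ φ ↔ Prv ∅ Γ φ := by
  have erasures_provable : ∀ ψ ∈ ({CdAx, NdAx} : Set Form), ∀ σ : ℕ → Form,
      Prv ∅ ∅ (ψ.subst σ).eraseDia := by
    rintro ψ (rfl | rfl) σ <;> exact Prv.bot_imp _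
  constructor
  · intro h
    simpa only [Form.image_eraseDia_eq_self hΓ, Form.eraseDia_eq_self hφ] using
      Prv.eraseDia erasures_provable h
  · exact Prv.mono_axioms (Set.empty_subset _)
end
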